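/- arXiv:2605.04990 — 2 statements merged into one kernel-verified Lean document; each statement's English description precedes it below -/
import Mathlib

section
/- Fix b ≥ 0. For every ℓ ∈ ℕ, among all integers a such that (a,b)^T has a representation over {p,m} in base M = [[1,1],[0,1]] in which the digit m occurs exactly ℓ times, the maximum value of a is b(b-1)/2 + 2bℓ + ℓ² and the minimum value of a is b(b-1)/2 - ℓ². -/
/-- The Jordan block `[[1,1],[0,1]]`. -/
def M1 : Matrix (Fin 2) (Fin 2) ℤ := !![1, 1; 0, 1]

/-- The digit `p = (0,1)ᵀ`. -/
def pd : Fin 2 → ℤ := ![0, 1]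

/-- The digit `m = (0,-1)ᵀ`. -/
def md : Fin 2 → ℤ := ![0, -1]

/-- The vector represented by the word `d_{k-1} … d_0`, namely `∑ M^i d_i`. -/
def val1 {k : ℕ} (d : Fin k → (Fin 2 → ℤ)) : Fin 2 → ℤ :=
  ∑ i : Fin k, (M1 ^ (i : ℕ)).mulVec (d i)

/-- The set of first coordinates `a` such that `(a,b)ᵀ` has a representation over `{p,m}`
in which the digit `m` occurs exactly `ℓ` times. -/
def Sset (b ℓ : ℕ) : Set ℤ :=
  {a : ℤ | ∃ (k : ℕ) (d : Fin k → (Fin 2 → ℤ)),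
    (∀ i, d i = pd ∨ d i = md) ∧
    (Finset.univ.filter (fun i : Fin k => d i = md)).card = ℓ ∧
    val1 d = ![a, (b : ℤ)]}

/-!
Since `M^i = [[1, i], [0, 1]]`, a word of length `k` with the digit `m` at the positions in
`S ⊆ {0, …, k-1}` represents `(∑_{i ∉ S} i - ∑_{i ∈ S} i, k - 2|S|)`. Hence `k = b + 2ℓ`, and
`a = k(k-1)/2 - 2 ∑_{i ∈ S} i = 2 ∑_{i ∉ S} i - k(k-1)/2`. A set of `n` naturals sums to at least
`n(n-1)/2`, with equality for `{0, …, n-1}`: applied to `S` (of size `ℓ`) this gives the maximum,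
applied to its complement (of size `b + ℓ`) the minimum.
-/

open Finset

theorem two_mul_sum_range_intCast (n : ℕ) : 2 * ∑ i ∈ range n, (i : ℤ) = n * (n - 1) := by
  induction n with
  | zero => simp
  | succ n ih => rw [sum_range_succ]; push_cast; linear_combination ih

theorem intCast_mul_sub_one_ediv_two (n : ℕ) : (n : ℤ) * (n - 1) / 2 = ∑ i ∈ range n, (i : ℤ) := by
  rw [← two_mul_sum_range_intCast, Int.mul_ediv_cancel_left _ two_ne_zero]

theorem two_mul_sum_univ_fin (k : ℕ) : 2 * ∑ i : Fin k, (i : ℤ) = k * (k - 1) := by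
  rw [Fin.sum_univ_eq_sum_range (fun i => (i : ℤ)), two_mul_sum_range_intCast]

theorem card_mul_card_sub_one_le_two_mul_sum {k : ℕ} (s : Finset (Fin k)) :
    (#s : ℤ) * (#s - 1) ≤ 2 * ∑ i ∈ s, (i : ℤ) := by
  have h := sum_range_le_sum (s := s.map (Fin.valEmbedding.trans Nat.castEmbedding)) (c := 0)
    (by simp)
  simp only [card_map, zero_add, sum_map] at h
  rw [← two_mul_sum_range_intCast]
  exact mul_le_mul_of_nonneg_left h two_pos.le

theorem card_map_castLEEmb {c k : ℕ} (h : c ≤ k) : #(univ.map (Fin.castLEEmb h)) = c := by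
  simp

theorem two_mul_sum_map_castLEEmb {c k : ℕ} (h : c ≤ k) :
    2 * ∑ i ∈ univ.map (Fin.castLEEmb h), (i : ℤ) = c * (c - 1) := by
  simp [sum_map, two_mul_sum_univ_fin]

theorem M1_pow (n : ℕ) : M1 ^ n = !![1, (n : ℤ); 0, 1] := by
  induction n with
  | zero => simp [Matrix.one_fin_two]
  | succ n ih => rw [pow_succ, ih]; simp [M1]; ring_nf

theorem M1_pow_mulVec_vertical (n : ℕ) (x : ℤ) : (M1 ^ n).mulVec ![0, x] = ![n * x, x] := by
  ext i; fin_cases i <;> simp [M1_pow, Matrix.mulVec, dotProduct]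

theorem pd_ne_md : pd ≠ md := by
  intro h; simpa [pd, md] using congrFun h 1

def word {k : ℕ} (s : Finset (Fin k)) : Fin k → Fin 2 → ℤ := fun i => if i ∈ s then md else pd

theorem eq_word {k : ℕ} {d : Fin k → Fin 2 → ℤ} (hd : ∀ i, d i = pd ∨ d i = md) :
    d = word {i | d i = md} := by
  funext i; rcases hd i with h | h <;> simp [word, h, pd_ne_md]

theorem filter_word_eq_md {k : ℕ} (s : Finset (Fin k)) : ({i | word s i = md} : Finset _) = s := by
  ext i; by_cases h : i ∈ s <;> simp [word, h, pd_ne_md]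

theorem val1_word {k : ℕ} (s : Finset (Fin k)) :
    val1 (word s) = ![∑ i ∈ sᶜ, (i : ℤ) - ∑ i ∈ s, (i : ℤ), #sᶜ - #s] := by
  have hm : ∀ i ∈ s, (M1 ^ (i : ℕ)).mulVec (word s i) = ![-(i : ℤ), -1] := fun i hi => by
    rw [word, if_pos hi, md, M1_pow_mulVec_vertical, mul_neg_one]
  have hp : ∀ i ∈ sᶜ, (M1 ^ (i : ℕ)).mulVec (word s i) = ![(i : ℤ), 1] := fun i hi => by
    rw [word, if_neg (mem_compl.1 hi), pd, M1_pow_mulVec_vertical, mul_one]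
  rw [val1, ← sum_add_sum_compl s, sum_congr rfl hm, sum_congr rfl hp]
  ext j; fin_cases j <;> simp [Finset.sum_apply] <;> ring

theorem mem_Sset_iff {b ℓ : ℕ} {a : ℤ} :
    a ∈ Sset b ℓ ↔ ∃ s : Finset (Fin (b + 2 * ℓ)),
      #s = ℓ ∧ a = ∑ i ∈ sᶜ, (i : ℤ) - ∑ i ∈ s, (i : ℤ) := by
  constructor
  · rintro ⟨k, d, hd, hcard, hval⟩
    rw [eq_word hd, val1_word, hcard] at hval
    have hk : k = b + 2 * ℓ := by
      have := congrFun hval 1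
      simp only [card_compl, Fintype.card_fin, Matrix.cons_val_one, Matrix.cons_val_zero] at this
      omega
    subst hk
    exact ⟨_, hcard, (congrFun hval 0).symm⟩
  · rintro ⟨s, hs, ha⟩
    refine ⟨_, word s, fun i => ?_, by rw [filter_word_eq_md, hs], ?_⟩
    · unfold word; split_ifs <;> simp
    · rw [val1_word, ha, hs, card_compl, Fintype.card_fin]
      ext j; fin_cases j <;> simp; omega

theorem isGreatest_Sset (b ℓ : ℕ) :
    IsGreatest (Sset b ℓ) (∑ i ∈ range b, (i : ℤ) + 2 * b * ℓ + ℓ ^ 2) := by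
  have hT := two_mul_sum_univ_fin (b + 2 * ℓ)
  have hB := two_mul_sum_range_intCast b
  push_cast at hT
  constructor
  · have h : ℓ ≤ b + 2 * ℓ := by omega
    refine mem_Sset_iff.2 ⟨_, card_map_castLEEmb h, ?_⟩
    have hsplit := sum_add_sum_compl (univ.map (Fin.castLEEmb h)) (fun i => (i : ℤ))
    linarith [two_mul_sum_map_castLEEmb h]
  · intro a ha
    obtain ⟨s, hs, rfl⟩ := mem_Sset_iff.1 ha
    have hsplit := sum_add_sum_compl s (fun i => (i : ℤ))
    have hS := card_mul_card_sub_one_le_two_mul_sum s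
    rw [hs] at hS
    linarith

theorem isLeast_Sset (b ℓ : ℕ) : IsLeast (Sset b ℓ) (∑ i ∈ range b, (i : ℤ) - ℓ ^ 2) := by
  have hT := two_mul_sum_univ_fin (b + 2 * ℓ)
  have hB := two_mul_sum_range_intCast b
  push_cast at hT
  constructor
  · have h : b + ℓ ≤ b + 2 * ℓ := by omega
    refine mem_Sset_iff.2 ⟨(univ.map (Fin.castLEEmb h))ᶜ, ?_, ?_⟩
    · rw [card_compl, Fintype.card_fin, card_map_castLEEmb h]; omega
    · have hsplit := sum_add_sum_compl (univ.map (Fin.castLEEmb h)) (fun i => (i : ℤ))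
      have hP := two_mul_sum_map_castLEEmb h
      push_cast at hP
      rw [compl_compl]
      linarith
  · intro a ha
    obtain ⟨s, hs, rfl⟩ := mem_Sset_iff.1 ha
    have hsplit := sum_add_sum_compl s (fun i => (i : ℤ))
    have hP := card_mul_card_sub_one_le_two_mul_sum sᶜ
    rw [card_compl, Fintype.card_fin, hs] at hP
    push_cast [show ℓ ≤ b + 2 * ℓ by omega] at hP
    linarith

theorem stmt4 (b ℓ : ℕ) :
    IsGreatest (Sset b ℓ) ((b : ℤ) * ((b : ℤ) - 1) / 2 + 2 * (b : ℤ) * (ℓ : ℤ) + (ℓ : ℤ) ^ 2)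
      ∧
    IsLeast (Sset b ℓ) ((b : ℤ) * ((b : ℤ) - 1) / 2 - (ℓ : ℤ) ^ 2) := by
  rw [intCast_mul_sub_one_ediv_two]
  exact ⟨isGreatest_Sset b ℓ, isLeast_Sset b ℓ⟩
end

section
/- Let h(a,b) denote the length of the shortest representation of (a,b)^T in base M = [[-1,1],[0,-1]] with digits {(0,1)^T, (0,0)^T}. If b > 0 and a = -b² + b, then h(a,b) = 2b - 1; if b ≤ 0 and a = b², then h(a,b) = 2|b|. -/
/-- The Jordan block `[[-1,1],[0,-1]]`. -/
def M2 : Matrix (Fin 2) (Fin 2) ℤ := !![-1, 1; 0, -1]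

/-- The zero digit `z = (0,0)ᵀ`. -/
def zd : Fin 2 → ℤ := ![0, 0]

/-- The vector represented by the word `d_{k-1} … d_0`, namely `∑ M^i d_i`. -/
def val2 {k : ℕ} (d : Fin k → (Fin 2 → ℤ)) : Fin 2 → ℤ :=
  ∑ i : Fin k, (M2 ^ (i : ℕ)).mulVec (d i)

/-- The set of lengths of representations of `(a,b)ᵀ` in base `M2` with digits `{p, z}`. -/
def RepLengths (a b : ℤ) : Set ℕ :=
  {k : ℕ | ∃ d : Fin k → (Fin 2 → ℤ), (∀ i, d i = pd ∨ d i = zd) ∧ val2 d = ![a, b]}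

/-!
Since `M^n p = ((-1)^(n+1) n, (-1)^n)`, the second coordinate of the value of a word of length `k`
is a signed count of its `p`-digits, hence lies between `-⌊k/2⌋` and `⌈k/2⌉`; this is the lower
bound. It is attained by putting `p` at every even (for `b > 0`) or every odd (for `b ≤ 0`)
position, and the first coordinates of these two words are `-b² + b` and `b²`.
-/

open Finset Matrix

lemma zd_eq_zero : zd = 0 := by
  ext i; fin_cases i <;> rfl

lemma M2_pow_mulVec_pd (n : ℕ) : M2 ^ n *ᵥ pd = ![-(-1) ^ n * (n : ℤ), (-1) ^ n] := by
  induction n with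
  | zero => ext i; fin_cases i <;> simp [pd]
  | succ n ih =>
    rw [pow_succ', ← mulVec_mulVec, ih]
    ext i; fin_cases i <;> simp [M2, mulVec, dotProduct, Fin.sum_univ_two, pow_succ]; ring

lemma val2_castSucc {k : ℕ} (d : Fin (k + 1) → Fin 2 → ℤ) :
    val2 d = val2 (d ∘ Fin.castSucc) + M2 ^ k *ᵥ d (Fin.last k) := by
  simp [val2, Fin.sum_univ_castSucc]

lemma val2_eq_sum_range (f : ℕ → Fin 2 → ℤ) (k : ℕ) :
    val2 (fun i : Fin k ↦ f i) = ∑ i ∈ range k, M2 ^ i *ᵥ f i :=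
  Fin.sum_univ_eq_sum_range (fun i ↦ M2 ^ i *ᵥ f i) k

lemma val2_one_mem_Icc {k : ℕ} (d : Fin k → Fin 2 → ℤ) (hd : ∀ i, d i = pd ∨ d i = zd) :
    val2 d 1 ∈ Set.Icc (-((k : ℤ) / 2)) (((k : ℤ) + 1) / 2) := by
  induction k with
  | zero => simp [val2]
  | succ k ih =>
    obtain ⟨hlo, hhi⟩ := ih (d ∘ Fin.castSucc) fun i ↦ hd _
    have hlast : (M2 ^ k *ᵥ d (Fin.last k)) 1 = (-1) ^ k ∨ (M2 ^ k *ᵥ d (Fin.last k)) 1 = 0 := by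
      rcases hd (Fin.last k) with h | h <;> simp only [h, M2_pow_mulVec_pd, zd_eq_zero] <;> simp
    rw [val2_castSucc, Pi.add_apply, Set.mem_Icc]
    push_cast
    rcases Nat.even_or_odd k with hk | hk
    · rw [hk.neg_one_pow] at hlast
      have := Nat.even_iff.mp hk
      omega
    · rw [hk.neg_one_pow] at hlast
      have := Nat.odd_iff.mp hk
      omega

lemma mem_Icc_of_mem_RepLengths {a b : ℤ} {k : ℕ} (hk : k ∈ RepLengths a b) :
    b ∈ Set.Icc (-((k : ℤ) / 2)) (((k : ℤ) + 1) / 2) := by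
  obtain ⟨d, hd, hv⟩ := hk
  simpa [hv] using val2_one_mem_Icc d hd

lemma two_mul_add_one_mem_RepLengths (m : ℕ) :
    2 * m + 1 ∈ RepLengths (-((m : ℤ) ^ 2 + m)) (m + 1) := by
  refine ⟨fun i ↦ if Even (i : ℕ) then pd else zd, fun i ↦ by dsimp only; split_ifs <;> simp, ?_⟩
  rw [val2_eq_sum_range (fun i ↦ if Even i then pd else zd)]
  induction m with
  | zero => ext i; fin_cases i <;> simp [pd]
  | succ m ih =>
    rw [show 2 * (m + 1) + 1 = 2 * m + 1 + 1 + 1 by ring, sum_range_succ, sum_range_succ, ih]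
    have hodd : ¬ Even (2 * m + 1) := by simp
    have heven : Even (2 * m + 1 + 1) := ⟨m + 1, by ring⟩
    simp only [hodd, heven, if_false, if_true, zd_eq_zero, mulVec_zero, M2_pow_mulVec_pd,
      heven.neg_one_pow]
    ext i; fin_cases i <;> simp; ring

lemma two_mul_mem_RepLengths (m : ℕ) : 2 * m ∈ RepLengths ((m : ℤ) ^ 2) (-m) := by
  refine ⟨fun i ↦ if Even (i : ℕ) then zd else pd, fun i ↦ by dsimp only; split_ifs <;> simp, ?_⟩
  rw [val2_eq_sum_range (fun i ↦ if Even i then zd else pd)]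
  induction m with
  | zero => ext i; fin_cases i <;> simp
  | succ m ih =>
    rw [show 2 * (m + 1) = 2 * m + 1 + 1 by ring, sum_range_succ, sum_range_succ, ih]
    have heven : Even (2 * m) := even_two_mul m
    have hodd : ¬ Even (2 * m + 1) := by simp
    simp only [hodd, heven, if_false, if_true, zd_eq_zero, mulVec_zero, M2_pow_mulVec_pd,
      (Nat.not_even_iff_odd.mp hodd).neg_one_pow]
    ext i; fin_cases i <;> simp <;> ring

theorem stmt15 (a b : ℤ) :
    (0 < b → a = -b ^ 2 + b → IsLeast (RepLengths a b) (2 * b.toNat - 1)) ∧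
    (b ≤ 0 → a = b ^ 2 → IsLeast (RepLengths a b) (2 * b.natAbs)) := by
  constructor
  · rintro hb rfl
    obtain ⟨m, rfl⟩ : ∃ m : ℕ, b = m + 1 := ⟨b.toNat - 1, by omega⟩
    have hlen : 2 * ((m : ℤ) + 1).toNat - 1 = 2 * m + 1 := by omega
    have ha : -((m : ℤ) + 1) ^ 2 + (m + 1) = -((m : ℤ) ^ 2 + m) := by ring
    rw [hlen, ha]
    refine ⟨two_mul_add_one_mem_RepLengths m, fun k hk ↦ ?_⟩
    obtain ⟨-, hle⟩ := mem_Icc_of_mem_RepLengths hk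
    omega
  · rintro hb rfl
    obtain ⟨m, rfl⟩ : ∃ m : ℕ, b = -m := ⟨b.natAbs, by omega⟩
    rw [Int.natAbs_neg, Int.natAbs_natCast, neg_sq]
    refine ⟨two_mul_mem_RepLengths m, fun k hk ↦ ?_⟩
    obtain ⟨hle, -⟩ := mem_Icc_of_mem_RepLengths hk
    omega
end
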